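/- Let n = p1⋯pk be a positive squarefree integer with n ≡ 1 (mod 8) and all prime factors p_i ≡ 1 (mod 4). Let A be the k×k matrix over F_2 with entries a_{ij} = [p_j/p_i] for i ≠ j and a_{ii} = Σ_{l≠i}[p_l/p_i], and let B = ([2/p_1], …, [2/p_k])^T. Suppose rank(A | B) = k − 1 and rank(A) = k − 2, and let x = (x_1, …, x_k)^T ∈ F_2^k be any element of the kernel of A other than 0 and (1, …, 1)^T. Then d = Π p_i^{x_i} satisfies d ≡ 5 (mod 8). -/

import Mathlib

/-! By quadratic reciprocity the matrix `A` is symmetric, and each diagonal entry is the sum of the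
others in its row, so `A 1 = 0`. For a symmetric matrix, kernel vectors are orthogonal to all columns;
hence `1` and `x` are orthogonal to every column of `A`. A prime `q ≡ 1 (mod 4)` satisfies
`q ≡ 5 ^ [2/q] (mod 8)`, so `n ≡ 5 ^ (1 ⬝ B)` and `d ≡ 5 ^ (x ⬝ B) (mod 8)`; `n ≡ 1` gives `1 ⬝ B = 0`.
If also `x ⬝ B = 0`, all columns of `(A | B)` would lie in the orthogonal complement of the independent
vectors `1, x`, so `rank (A | B) ≤ k - 2`. Hence `x ⬝ B = 1` and `d ≡ 5 (mod 8)`. -/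
open Classical in
/-- The additive Legendre symbol `[a/p] ∈ F₂`: `0` if `a` is a square mod `p`, `1` otherwise. -/
noncomputable def aLeg (a : ℤ) (p : ℕ) : ZMod 2 :=
  if IsSquare ((a : ZMod p)) then 0 else 1

/-- The matrix `A`: `a_{ij} = [p_j/p_i]` for `i ≠ j` and `a_{ii} = Σ_{l ≠ i} [p_l/p_i]`. -/
noncomputable def monskyA (k : ℕ) (p : Fin k → ℕ) : Matrix (Fin k) (Fin k) (ZMod 2) :=
  Matrix.of fun i j =>
    if i = j then ∑ l ∈ Finset.univ.filter (· ≠ i), aLeg (p l) (p i) else aLeg (p j) (p i)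

open Matrix

lemma aLeg_comm {q r : ℕ} (hq : q.Prime) (hr : r.Prime) (hq4 : q % 4 = 1) (hr4 : r % 4 = 1) :
    aLeg q r = aLeg r q := by
  have : Fact q.Prime := ⟨hq⟩
  have : Fact r.Prime := ⟨hr⟩
  simp only [aLeg, Int.cast_natCast,
    ZMod.exists_sq_eq_prime_iff_of_mod_four_eq_one hq4 (by omega : r ≠ 2)]

lemma monskyA_isSymm {k : ℕ} {p : Fin k → ℕ} (hp : ∀ i, (p i).Prime) (hp4 : ∀ i, p i % 4 = 1) :
    (monskyA k p).IsSymm :=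
  IsSymm.ext fun i j => by
    rcases eq_or_ne i j with rfl | hij
    · rfl
    · simp only [monskyA, of_apply, if_neg hij, if_neg hij.symm]
      exact aLeg_comm (hp i) (hp j) (hp4 i) (hp4 j)

lemma monskyA_mulVec_one (k : ℕ) (p : Fin k → ℕ) : monskyA k p *ᵥ 1 = 0 := by
  funext i
  have hoff : ∑ j ∈ Finset.univ.erase i, monskyA k p i j = monskyA k p i i := by
    rw [monskyA, of_apply, if_pos rfl, ← Finset.filter_ne']
    exact Finset.sum_congr rfl fun j hj => if_neg (Finset.mem_filter.1 hj).2.symm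
  simp only [mulVec, dotProduct, Pi.one_apply, mul_one, Pi.zero_apply]
  rw [← Finset.add_sum_erase _ _ (Finset.mem_univ i), hoff, CharTwo.add_self_eq_zero]

theorem Matrix.IsSymm.mul_eq_zero_of_mulVec_eq_zero {m n R : Type*} [Fintype n] [CommSemiring R]
    {A : Matrix n n R} (hA : A.IsSymm) {C : Matrix m n R} (hC : ∀ i, A *ᵥ C i = 0) :
    C * A = 0 := by
  ext i j
  have := congrFun (hC i) j
  rwa [← hA.eq, mulVec_transpose, vecMul] at this

lemma linearIndependent_one_pair {ι : Type*} {x : ι → ZMod 2} (h0 : x ≠ 0) (h1 : x ≠ 1) :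
    LinearIndependent (ZMod 2) ![1, x] := by
  have h10 : (1 : ι → ZMod 2) ≠ 0 := fun h => h0 (by simpa using congrArg (x * ·) h)
  rw [LinearIndependent.pair_iff' h10]
  intro a
  rcases (by decide : ∀ a : ZMod 2, a = 0 ∨ a = 1) a with rfl | rfl
  · simpa using h0.symm
  · simpa using h1.symm

lemma AddChar.map_sum_eq_prod {ι A M : Type*} [AddCommMonoid A] [CommMonoid M] (ψ : AddChar A M)
    (s : Finset ι) (f : ι → A) : ψ (∑ i ∈ s, f i) = ∏ i ∈ s, ψ (f i) := by
  simpa only [← ofAdd_sum, AddChar.toMonoidHom_apply, toAdd_ofAdd] using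
    map_prod ψ.toMonoidHom (fun i => Multiplicative.ofAdd (f i)) s

def fivePow : AddChar (ZMod 2) (ZMod 8) where
  toFun a := 5 ^ a.val
  map_zero_eq_one' := rfl
  map_add_eq_mul' := by decide

@[simp]
lemma fivePow_one : fivePow 1 = 5 := rfl

lemma fivePow_injective : Function.Injective fivePow := by decide

lemma natCast_eq_fivePow_aLeg_two {q : ℕ} (hq : q.Prime) (hq4 : q % 4 = 1) :
    (q : ZMod 8) = fivePow (aLeg 2 q) := by
  have : Fact q.Prime := ⟨hq⟩
  have hsq := ZMod.exists_sq_eq_two_iff (p := q) (by omega)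
  rw [← ZMod.natCast_mod]
  unfold aLeg
  rcases (by omega : q % 8 = 1 ∨ q % 8 = 5) with h | h <;> simp [h, hsq]

lemma natCast_prod_pow_val_eq_fivePow {ι : Type*} [Fintype ι] {p : ι → ℕ}
    (hp : ∀ i, (p i).Prime) (hp4 : ∀ i, p i % 4 = 1) (y : ι → ZMod 2) :
    ((∏ i, p i ^ (y i).val : ℕ) : ZMod 8) = fivePow (y ⬝ᵥ fun i => aLeg 2 (p i)) := by
  simp_rw [Nat.cast_prod, Nat.cast_pow, natCast_eq_fivePow_aLeg_two (hp _) (hp4 _),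
    ← AddChar.map_nsmul_eq_pow, dotProduct, AddChar.map_sum_eq_prod, nsmul_eq_mul,
    ZMod.natCast_zmod_val]

theorem stmt_12_general (k : ℕ) (p : Fin k → ℕ) (hp : ∀ i, (p i).Prime)
    (n : ℕ) (hn : n = ∏ i, p i) (hn8 : n % 8 = 1) (hp4 : ∀ i, p i % 4 = 1)
    (hrkAB : (Matrix.fromCols (monskyA k p)
      (Matrix.of fun i (_ : Unit) => aLeg 2 (p i))).rank = k - 1)
    (x : Fin k → ZMod 2) (hx : (monskyA k p).mulVec x = 0)
    (hx0 : x ≠ 0) (hx1 : x ≠ fun _ => 1)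
    (d : ℕ) (hd : d = ∏ i, p i ^ (x i).val) :
    d % 8 = 5 := by
  set B : Fin k → ZMod 2 := fun i => aLeg 2 (p i)
  have hB1 : 1 ⬝ᵥ B = 0 := by
    have h := natCast_prod_pow_val_eq_fivePow hp hp4 1
    simp only [Pi.one_apply, ZMod.val_one, pow_one, ← hn, Nat.cast_one, ← ZMod.natCast_mod n,
      hn8] at h
    exact fivePow_injective (by rw [← h, AddChar.map_zero_eq_one])
  have hxB : x ⬝ᵥ B ≠ 0 := by
    intro hxB
    let C : Matrix (Fin 2) (Fin k) (ZMod 2) := of ![1, x]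
    have hCA : C * monskyA k p = 0 :=
      (monskyA_isSymm hp hp4).mul_eq_zero_of_mulVec_eq_zero <|
        Fin.forall_fin_two.2 ⟨monskyA_mulVec_one k p, hx⟩
    have hCB : C * of (fun i (_ : Unit) => aLeg 2 (p i)) = 0 := by
      ext r u
      fin_cases r
      · simpa [C, mul_apply, dotProduct] using hB1
      · simpa [C, mul_apply, dotProduct] using hxB
    have hrk := rank_add_rank_le_card_of_mul_eq_zero
      (A := C) (B := fromCols (monskyA k p) (of fun i (_ : Unit) => aLeg 2 (p i)))
      (by rw [mul_fromCols, hCA, hCB, fromCols_zero])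
    rw [LinearIndependent.rank_matrix (M := C) (linearIndependent_one_pair hx0 hx1), hrkAB] at hrk
    simp only [Fintype.card_fin] at hrk
    omega
  have hd8 : (d : ZMod 8) = 5 := by
    rw [hd, natCast_prod_pow_val_eq_fivePow hp hp4, Fin.eq_one_of_ne_zero _ hxB]
    exact fivePow_one
  rw [← ZMod.val_natCast, hd8]
  rfl

/-- if `rank (A | B) = k − 1` and `rank A = k − 2`, then for any kernel vector
`x` of `A` other than `0` and `(1,…,1)`, the divisor `d = Π p_i^{x_i}` satisfies
`d ≡ 5 (mod 8)`. -/
theorem stmt_12 (k : ℕ) (p : Fin k → ℕ) (hp : ∀ i, (p i).Prime)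
    (hinj : Function.Injective p)
    (n : ℕ) (hn : n = ∏ i, p i) (hn8 : n % 8 = 1) (hp4 : ∀ i, p i % 4 = 1)
    (hrkAB : (Matrix.fromCols (monskyA k p)
      (Matrix.of fun i (_ : Unit) => aLeg 2 (p i))).rank = k - 1)
    (hrkA : (monskyA k p).rank = k - 2)
    (x : Fin k → ZMod 2) (hx : (monskyA k p).mulVec x = 0)
    (hx0 : x ≠ 0) (hx1 : x ≠ fun _ => 1)
    (d : ℕ) (hd : d = ∏ i, p i ^ (x i).val) :
    d % 8 = 5 :=
  stmt_12_general k p hp n hn hn8 hp4 hrkAB x hx hx0 hx1 d hd
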